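/- arXiv:math/0512074 — 2 statements merged into one kernel-verified Lean document; each statement's English description precedes it below -/
import Mathlib

section
/- Let K be a field of characteristic zero with derivation D whose constant field is κ. Let u_1, u_2 ∈ K be nonzero, L_i = D(u_i)/u_i, and let A ∈ κ[X,Y] be a polynomial containing at least two distinct monomials X^iY^j and X^hY^k with nonzero coefficients. If B(X,Y) = L_1·X·∂A/∂X + L_2·Y·∂A/∂Y equals λ·A(X,Y) for some λ ∈ K, then (i−h)·L_1 = (k−j)·L_2; in particular there exist integers (r,s) ≠ (0,0) with r·L_1 + s·L_2 = 0. -/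
open MvPolynomial in
lemma coeff_X_mul_pderiv {K : Type*} [CommRing K] (i : Fin 2) (p : MvPolynomial (Fin 2) K)
    (m : Fin 2 →₀ ℕ) :
    coeff m (X i * pderiv i p) = (m i : K) * coeff m p := by
  induction p using MvPolynomial.induction_on' with
  | monomial s a =>
    rw [pderiv_monomial]
    rcases Nat.eq_zero_or_pos (s i) with hs | hs
    · simp only [hs, Nat.cast_zero, mul_zero, monomial_zero, mul_zero, coeff_zero]
      rw [coeff_monomial]
      split_ifs with h
      · subst h; simp [hs]
      · ring
    · have hle : Finsupp.single i 1 ≤ s := by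
        rw [Finsupp.single_le_iff]; omega
      have : X i * monomial (s - Finsupp.single i 1) (a * (s i : K))
          = monomial s (a * (s i : K)) := by
        rw [X, monomial_mul, one_mul, add_comm, tsub_add_cancel_of_le hle]
      rw [this, coeff_monomial, coeff_monomial]
      split_ifs with h
      · subst h; ring
      · ring
  | add p q hp hq =>
    rw [map_add, mul_add, coeff_add, coeff_add, hp, hq, mul_add]


open MvPolynomial in
/-- If `A` has constant coefficients and contains two distinct monomials `X^iY^j`,
`X^hY^k` with nonzero coefficients, and `B = L₁X·∂A/∂X + L₂Y·∂A/∂Y = λ·A`, then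
`(i−h)L₁ = (k−j)L₂`; in particular `rL₁ + sL₂ = 0` for some `(r,s) ≠ (0,0)`. -/
theorem stmt_7 {K : Type*} [Field K] [CharZero K] (D : Derivation ℚ K K)
    (u₁ u₂ : K) (h₁ : u₁ ≠ 0) (h₂ : u₂ ≠ 0)
    (A : MvPolynomial (Fin 2) K) (hA : ∀ m, D (coeff m A) = 0)
    (m₁ m₂ : Fin 2 →₀ ℕ) (hne : m₁ ≠ m₂)
    (hc₁ : coeff m₁ A ≠ 0) (hc₂ : coeff m₂ A ≠ 0)
    (lam : K)
    (hB : C (D u₁ / u₁) * X 0 * pderiv 0 A + C (D u₂ / u₂) * X 1 * pderiv 1 A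
        = C lam * A) :
    ((((m₁ 0 : ℤ) - (m₂ 0 : ℤ) : ℤ) : K) * (D u₁ / u₁)
        = (((m₂ 1 : ℤ) - (m₁ 1 : ℤ) : ℤ) : K) * (D u₂ / u₂))
    ∧ ∃ r s : ℤ, (r, s) ≠ (0, 0)
        ∧ (r : K) * (D u₁ / u₁) + (s : K) * (D u₂ / u₂) = 0 := by
  set L₁ := D u₁ / u₁ with hL₁
  set L₂ := D u₂ / u₂ with hL₂
  have key : ∀ m : Fin 2 →₀ ℕ, coeff m A ≠ 0 →
      (m 0 : K) * L₁ + (m 1 : K) * L₂ = lam := by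
    intro m hm
    have h := congrArg (coeff m) hB
    rw [coeff_add, mul_assoc, mul_assoc, coeff_C_mul, coeff_C_mul, coeff_C_mul,
      coeff_X_mul_pderiv, coeff_X_mul_pderiv] at h
    have h' : ((m 0 : K) * L₁ + (m 1 : K) * L₂) * coeff m A = lam * coeff m A := by
      linear_combination h
    exact mul_right_cancel₀ hm h'
  have e₁ := key m₁ hc₁
  have e₂ := key m₂ hc₂
  constructor
  · push_cast
    linear_combination e₁ - e₂
  · refine ⟨(m₁ 0 : ℤ) - (m₂ 0 : ℤ), (m₁ 1 : ℤ) - (m₂ 1 : ℤ), ?_, ?_⟩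
    · have hd : ∃ i, m₁ i ≠ m₂ i := by
        by_contra hcon
        push_neg at hcon
        exact hne (Finsupp.ext hcon)
      obtain ⟨i, hi⟩ := hd
      intro hx
      rw [Prod.mk.injEq] at hx
      have h0 : m₁ 0 = m₂ 0 := by omega
      have h1 : m₁ 1 = m₂ 1 := by omega
      fin_cases i
      · exact hi h0
      · exact hi h1
    · push_cast
      linear_combination e₁ - e₂
end

section
/- Let C be a smooth projective curve over an algebraically closed field κ of characteristic zero, S a finite set of points, and let a, b ∈ κ(C)* be S-units, not both constant, satisfying a generating multiplicative relation a^r = b^s with gcd(r,s) = 1, r, s nonzero. Then there exists an S-unit c ∈ κ(C)* with a = c^s and b = c^r, and Σ_{v ∉ S} min{ord_v(1−a), ord_v(1−b)} ≤ H(c) = H(a)/|s| = H(b)/|r|, where H denotes the degree of a rational function as a map to P¹. -/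
/-- Multiplicatively dependent case of Corollary 2.3: if the `S`-units `a, b`
(not both constant) satisfy a generating relation `a^r = b^s` with `gcd(r,s) = 1`,
then `a = c^s`, `b = c^r` for an `S`-unit `c`, and
`Σ_{v ∉ S} min(ord_v(1−a), ord_v(1−b)) ≤ H(c) = H(a)/|s| = H(b)/|r|`,
where `H(f) = Σ_v max(0, ord_v f)` is the height. -/
theorem stmt_15 {κ K V : Type*} [Field κ] [IsAlgClosed κ] [CharZero κ]
    [Field K] [Algebra κ K]
    (ord : V → K → ℤ)
    (hmul : ∀ v, ∀ x y : K, x ≠ 0 → y ≠ 0 → ord v (x * y) = ord v x + ord v y)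
    (hadd : ∀ v, ∀ x y : K, x ≠ 0 → y ≠ 0 → x + y ≠ 0 →
      min (ord v x) (ord v y) ≤ ord v (x + y))
    (hfin : ∀ x : K, x ≠ 0 → {v | ord v x ≠ 0}.Finite)
    (hdeg : ∀ x : K, x ≠ 0 → ∑ᶠ v, ord v x = 0)
    (hconstord : ∀ c : κ, c ≠ 0 → ∀ v, ord v (algebraMap κ K c) = 0)
    (hconst : ∀ x : K, x ≠ 0 → (∀ v, ord v x = 0) → x ∈ (algebraMap κ K).range)
    (S : Finset V) (a b : K) (ha : a ≠ 0) (hb : b ≠ 0)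
    (haS : ∀ v, v ∉ S → ord v a = 0) (hbS : ∀ v, v ∉ S → ord v b = 0)
    (hnc : ¬ (a ∈ (algebraMap κ K).range ∧ b ∈ (algebraMap κ K).range))
    (r s : ℤ) (hr : r ≠ 0) (hs : s ≠ 0) (hco : IsCoprime r s)
    (hrel : a ^ r = b ^ s) :
    ∃ c : K, c ≠ 0 ∧ (∀ v, v ∉ S → ord v c = 0) ∧ a = c ^ s ∧ b = c ^ r
      ∧ (∑ᶠ (v) (_ : v ∉ S), min (ord v (1 - a)) (ord v (1 - b)))
          ≤ ∑ᶠ v, max 0 (ord v c)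
      ∧ |s| * (∑ᶠ v, max 0 (ord v c)) = ∑ᶠ v, max 0 (ord v a)
      ∧ |r| * (∑ᶠ v, max 0 (ord v c)) = ∑ᶠ v, max 0 (ord v b) := by
  classical
  -- basic facts about ord
  have ord1 : ∀ v, ord v (1 : K) = 0 := by
    intro v
    have h := hmul v 1 1 one_ne_zero one_ne_zero
    rw [mul_one] at h; omega
  have ordneg : ∀ v (x : K), x ≠ 0 → ord v (-x) = ord v x := by
    intro v x hx
    have h1 := hmul v (-1 : K) (-1 : K) (by norm_num) (by norm_num)
    rw [show ((-1 : K) * (-1)) = 1 by ring, ord1 v] at h1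
    have h2 := hmul v (-1 : K) x (by norm_num) hx
    rw [neg_one_mul] at h2
    omega
  have ordinv : ∀ v (x : K), x ≠ 0 → ord v x⁻¹ = -ord v x := by
    intro v x hx
    have h := hmul v x x⁻¹ hx (inv_ne_zero hx)
    rw [mul_inv_cancel₀ hx, ord1 v] at h; omega
  have ordpow : ∀ v (x : K), x ≠ 0 → ∀ n : ℕ, ord v (x ^ n) = n * ord v x := by
    intro v x hx n
    induction n with
    | zero => simpa using ord1 v
    | succ n ih =>
      rw [pow_succ, hmul v _ x (pow_ne_zero _ hx) hx, ih]
      push_cast; ring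
  have ordzpow : ∀ v (x : K), x ≠ 0 → ∀ n : ℤ, ord v (x ^ n) = n * ord v x := by
    intro v x hx n
    induction n using Int.induction_on with
    | zero => simpa using ord1 v
    | succ i ih =>
      rw [zpow_add₀ hx _ 1, hmul v _ _ (zpow_ne_zero _ hx) (zpow_ne_zero _ hx), ih, zpow_one]
      ring
    | pred i ih =>
      rw [sub_eq_add_neg, zpow_add₀ hx, hmul v _ _ (zpow_ne_zero _ hx) (zpow_ne_zero _ hx),
        ih, zpow_neg, zpow_one, ordinv v x hx]
      ring
  haveI : CharZero K := charZero_of_injective_algebraMap (algebraMap κ K).injective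
  -- Bezout coefficients
  obtain ⟨u1, u2, huv⟩ := hco
  set c : K := a ^ u2 * b ^ u1 with hcdef
  have hc0 : c ≠ 0 := mul_ne_zero (zpow_ne_zero _ ha) (zpow_ne_zero _ hb)
  have hca : a = c ^ s := by
    rw [hcdef, mul_zpow, ← zpow_mul, ← zpow_mul, show u1 * s = s * u1 by ring,
      zpow_mul b s u1, ← hrel, ← zpow_mul, ← zpow_add₀ ha,
      show u2 * s + r * u1 = 1 by linarith [huv]]
    simp
  have hcb : b = c ^ r := by
    rw [hcdef, mul_zpow, ← zpow_mul, ← zpow_mul, show u2 * r = r * u2 by ring,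
      zpow_mul a r u2, hrel, ← zpow_mul, ← zpow_add₀ hb,
      show s * u2 + u1 * r = 1 by linarith [huv]]
    simp
  have ordc0 : ∀ v, v ∉ S → ord v c = 0 := by
    intro v hv
    rw [hcdef, hmul v _ _ (zpow_ne_zero _ ha) (zpow_ne_zero _ hb),
      ordzpow v a ha, ordzpow v b hb, haS v hv, hbS v hv]
    ring
  have orda : ∀ v, ord v a = s * ord v c := by
    intro v; rw [hca, ordzpow v c hc0]
  have ordb : ∀ v, ord v b = r * ord v c := by
    intro v; rw [hcb, ordzpow v c hc0]
  -- c is not a root of unity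
  have hcnru : ∀ n : ℤ, n ≠ 0 → c ^ n ≠ 1 := by
    intro n hn hcn
    have hordc : ∀ v, ord v c = 0 := by
      intro v
      have := ordzpow v c hc0 n
      rw [hcn, ord1 v] at this
      rcases mul_eq_zero.mp this.symm with h | h
      · exact absurd h hn
      · exact h
    obtain ⟨γ, hγ⟩ := hconst c hc0 hordc
    exact hnc ⟨⟨γ ^ s, by rw [map_zpow₀, hγ, ← hca]⟩, ⟨γ ^ r, by rw [map_zpow₀, hγ, ← hcb]⟩⟩
  have h1c : (1 : K) - c ≠ 0 := by
    intro h
    exact hcnru 1 one_ne_zero (by rw [zpow_one]; linear_combination -h)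
  have h1a : (1 : K) - a ≠ 0 := by
    intro h
    exact hcnru s hs (by rw [← hca]; linear_combination -h)
  have h1b : (1 : K) - b ≠ 0 := by
    intro h
    exact hcnru r hr (by rw [← hcb]; linear_combination -h)
  have h1cz : ∀ n : ℤ, n ≠ 0 → (1 : K) - c ^ n ≠ 0 := by
    intro n hn h
    exact hcnru n hn (by linear_combination -h)
  -- ord of a sum with strictly smaller term
  have ordaddeq : ∀ v (x y : K), x ≠ 0 → y ≠ 0 → ord v x < ord v y →
      x + y ≠ 0 ∧ ord v (x + y) = ord v x := by
    intro v x y hx hy hlt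
    have hxy : x + y ≠ 0 := by
      intro h
      have : x = -y := by linear_combination h
      rw [this, ordneg v y hy] at hlt; omega
    refine ⟨hxy, ?_⟩
    have h1 := hadd v x y hx hy hxy
    have h2 := hadd v (x + y) (-y) hxy (neg_ne_zero.2 hy) (by simpa using hx)
    rw [add_neg_cancel_right, ordneg v y hy] at h2
    omega
  -- key pointwise inequality
  have keypt : ∀ v, v ∉ S →
      min (ord v (1 - a)) (ord v (1 - b)) ≤ ord v (1 - c) := by
    intro v hv
    have ocv : ord v c = 0 := ordc0 v hv
    have ocp : ∀ n : ℤ, ord v (c ^ n) = 0 := by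
      intro n; rw [ordzpow v c hc0, ocv, mul_zero]
    set t := ord v (1 - c) with htdef
    have ht0 : 0 ≤ t := by
      have h := hadd v 1 (-c) one_ne_zero (neg_ne_zero.2 hc0)
        (by rw [← sub_eq_add_neg]; exact h1c)
      rw [← sub_eq_add_neg, ord1 v, ordneg v c hc0, ocv] at h
      omega
    -- ord v (1 - c^n) ≥ min over the additive structure
    have hzsub : ∀ m n : ℤ, m ≠ 0 → n ≠ 0 → m + n ≠ 0 →
        min (ord v (1 - c ^ m)) (ord v (1 - c ^ n)) ≤ ord v (1 - c ^ (m + n)) := by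
      intro m n hm hn hmn
      have e : (1 : K) - c ^ (m + n) = (1 - c ^ m) + c ^ m * (1 - c ^ n) := by
        have hx : c ^ m * c ^ n = c ^ (m + n) := (zpow_add₀ hc0 m n).symm
        linear_combination hx
      have h := hadd v (1 - c ^ m) (c ^ m * (1 - c ^ n)) (h1cz m hm)
        (mul_ne_zero (zpow_ne_zero _ hc0) (h1cz n hn)) (by rw [← e]; exact h1cz _ hmn)
      rw [hmul v _ _ (zpow_ne_zero _ hc0) (h1cz n hn), ocp m] at h
      rw [e]
      omega
    have hzneg : ∀ n : ℤ, n ≠ 0 → ord v (1 - c ^ (-n)) = ord v (1 - c ^ n) := by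
      intro n hn
      have e : (1 : K) - c ^ (-n) = (-(c ^ (-n))) * (1 - c ^ n) := by
        have hx : c ^ (-n) * c ^ n = 1 := by
          rw [← zpow_add₀ hc0]; simp
        linear_combination -hx
      rw [e, hmul v _ _ (neg_ne_zero.2 (zpow_ne_zero _ hc0)) (h1cz n hn),
        ordneg v _ (zpow_ne_zero _ hc0), ocp]
      ring
    rcases eq_or_lt_of_le ht0 with h0 | hpos
    · -- case t = 0 : use the subgroup/coprimality argument
      by_contra hcon
      push_neg at hcon
      have hQs : 0 < ord v (1 - c ^ s) := by
        rw [← hca]; omega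
      have hQr : 0 < ord v (1 - c ^ r) := by
        rw [← hcb]; omega
      set Q : ℤ → Prop := fun n => n = 0 ∨ 0 < ord v (1 - c ^ n) with hQdef
      have hQneg : ∀ n, Q n → Q (-n) := by
        rintro n (rfl | hn)
        · left; ring
        · rcases eq_or_ne n 0 with rfl | hn0
          · left; ring
          · right; rw [hzneg n hn0]; exact hn
      have hQadd : ∀ m n, Q m → Q n → Q (m + n) := by
        rintro m n (rfl | hm) hn
        · simpa using hn
        · rcases hn with rfl | hn
          · simpa using Or.inr hm
          · rcases eq_or_ne m 0 with rfl | hm0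
            · simpa using Or.inr hn
            rcases eq_or_ne n 0 with rfl | hn0
            · simpa using Or.inr hm
            rcases eq_or_ne (m + n) 0 with hmn | hmn
            · exact Or.inl hmn
            · right
              have := hzsub m n hm0 hn0 hmn
              omega
      have hQsmul : ∀ (k n : ℤ), Q n → Q (k * n) := by
        intro k n hn
        induction k using Int.induction_on with
        | zero => exact Or.inl (by ring)
        | succ i ih => have := hQadd _ _ ih hn; rwa [show (i : ℤ) * n + n = (i + 1) * n by ring] at this
        | pred i ih =>
          have := hQadd _ _ ih (hQneg n hn)
          rwa [show (-(i : ℤ)) * n + -n = (-(i : ℤ) - 1) * n by ring] at this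
      have hQ1 : Q 1 := by
        have := hQadd _ _ (hQsmul u1 r (Or.inr hQr)) (hQsmul u2 s (Or.inr hQs))
        rwa [huv] at this
      rcases hQ1 with h | h
      · omega
      · rw [zpow_one] at h; omega
    · -- case t > 0 : ord v (1 - c^n) = t for all n ≠ 0
      have hBn : ∀ n : ℕ, t ≤ ord v (1 - c ^ ((n : ℤ) + 1)) := by
        intro n
        induction n with
        | zero => simp [htdef]
        | succ n ih =>
          have h := hzsub 1 ((n : ℤ) + 1) one_ne_zero (by positivity) (by positivity)
          rw [zpow_one] at h
          push_cast
          rw [show ((n : ℤ) + 1 + 1) = (1 + ((n : ℤ) + 1)) by ring]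
          omega
      -- the geometric sum has ord 0
      have hgeo : ∀ n : ℕ, ord v (∑ i ∈ Finset.range (n + 1), c ^ i) = 0 := by
        intro n
        have hdne : ∀ m : ℕ,
            (∑ i ∈ Finset.range (m + 1), c ^ i) - ((m : K) + 1) = 0 ∨
            ((∑ i ∈ Finset.range (m + 1), c ^ i) - ((m : K) + 1) ≠ 0 ∧
              t ≤ ord v ((∑ i ∈ Finset.range (m + 1), c ^ i) - ((m : K) + 1))) := by
          intro m
          induction m with
          | zero => left; simp
          | succ m ih =>
            have estep : (∑ i ∈ Finset.range (m + 1 + 1), c ^ i) - (((m : K) + 1) + 1) =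
                ((∑ i ∈ Finset.range (m + 1), c ^ i) - ((m : K) + 1)) + (c ^ (m + 1) - 1) := by
              rw [Finset.sum_range_succ]; ring
            have hyne : c ^ (m + 1) - (1 : K) ≠ 0 := by
              intro h
              apply h1cz ((m : ℤ) + 1) (by positivity)
              rw [show ((m : ℤ) + 1) = ((m + 1 : ℕ) : ℤ) by push_cast; ring, zpow_natCast]
              linear_combination -h
            have hyord : t ≤ ord v (c ^ (m + 1) - 1) := by
              have h1 : c ^ (m + 1) - (1 : K) = -(1 - c ^ (((m : ℤ)) + 1)) := by
                rw [show ((m : ℤ) + 1) = ((m + 1 : ℕ) : ℤ) by push_cast; ring, zpow_natCast]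
                ring
              have h2 : (1 : K) - c ^ ((m : ℤ) + 1) ≠ 0 := h1cz _ (by positivity)
              rw [h1, ordneg v _ h2]
              exact hBn m
            rcases ih with hz | ⟨hne, hord⟩
            · rcases eq_or_ne ((∑ i ∈ Finset.range (m + 1 + 1), c ^ i) - (((m : K) + 1) + 1)) 0 with h | h
              · left; push_cast at h ⊢; linear_combination h
              · right
                constructor
                · push_cast; push_cast at h; exact h
                have e2 : (∑ i ∈ Finset.range (m + 1 + 1), c ^ i) - (((m + 1 : ℕ) : K) + 1) =
                    c ^ (m + 1) - 1 := by
                  rw [Finset.sum_range_succ]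
                  push_cast
                  linear_combination hz
                rw [e2]
                exact hyord
            · rcases eq_or_ne ((∑ i ∈ Finset.range (m + 1 + 1), c ^ i) - (((m + 1 : ℕ) : K) + 1)) 0 with h | h
              · left; exact h
              · right
                refine ⟨h, ?_⟩
                have e2 : (∑ i ∈ Finset.range (m + 1 + 1), c ^ i) - (((m + 1 : ℕ) : K) + 1) =
                    ((∑ i ∈ Finset.range (m + 1), c ^ i) - ((m : K) + 1)) + (c ^ (m + 1) - 1) := by
                  rw [Finset.sum_range_succ]; push_cast; ring
                rw [e2] at h ⊢
                have := hadd v _ _ hne hyne h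
                omega
        have hcstne : ((n : K) + 1) ≠ 0 := Nat.cast_add_one_ne_zero n
        have hcstord : ord v ((n : K) + 1) = 0 := by
          have e4 : ((n : K) + 1) = algebraMap κ K ((n : κ) + 1) := by
            rw [map_add, map_natCast, map_one]
          rw [e4]
          exact hconstord _ (Nat.cast_add_one_ne_zero n) v
        have esum : (∑ i ∈ Finset.range (n + 1), c ^ i) =
            ((n : K) + 1) + ((∑ i ∈ Finset.range (n + 1), c ^ i) - ((n : K) + 1)) := by ring
        rcases hdne n with hz | ⟨hne, hord⟩
        · rw [esum, hz, add_zero, hcstord]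
        · rw [esum]
          have := ordaddeq v ((n : K) + 1) _ hcstne hne (by omega)
          rw [this.2, hcstord]
      have hordnat : ∀ n : ℕ, ord v (1 - c ^ ((n : ℤ) + 1)) = t := by
        intro n
        have egeom : (1 : K) - c ^ ((n : ℤ) + 1) =
            (∑ i ∈ Finset.range (n + 1), c ^ i) * (1 - c) := by
          have := geom_sum_mul c (n + 1)
          rw [show ((n : ℤ) + 1) = ((n + 1 : ℕ) : ℤ) by push_cast; ring, zpow_natCast]
          linear_combination this
        have hsne : (∑ i ∈ Finset.range (n + 1), c ^ i) ≠ 0 := by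
          intro h
          apply h1cz ((n : ℤ) + 1) (by positivity)
          rw [egeom, h, zero_mul]
        rw [egeom, hmul v _ _ hsne h1c, hgeo n]
        omega
      have hordint : ∀ n : ℤ, n ≠ 0 → ord v (1 - c ^ n) = t := by
        intro n hn
        rcases lt_or_gt_of_ne hn with hneg | hposn
        · rw [← neg_neg n, hzneg (-n) (by omega)]
          obtain ⟨m, hm⟩ : ∃ m : ℕ, -n = (m : ℤ) + 1 := ⟨(-n - 1).toNat, by omega⟩
          rw [hm]; exact hordnat m
        · obtain ⟨m, hm⟩ : ∃ m : ℕ, n = (m : ℤ) + 1 := ⟨(n - 1).toNat, by omega⟩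
          rw [hm]; exact hordnat m
      rw [hca, hcb, hordint s hs, hordint r hr]
      omega
  -- Nonnegativity of the summand off S
  have minpos : ∀ v, v ∉ S → 0 ≤ min (ord v (1 - a)) (ord v (1 - b)) := by
    intro v hv
    have hha := hadd v 1 (-a) one_ne_zero (neg_ne_zero.2 ha)
      (by rw [← sub_eq_add_neg]; exact h1a)
    have hhb := hadd v 1 (-b) one_ne_zero (neg_ne_zero.2 hb)
      (by rw [← sub_eq_add_neg]; exact h1b)
    rw [← sub_eq_add_neg, ord1 v, ordneg v a ha, haS v hv] at hha
    rw [← sub_eq_add_neg, ord1 v, ordneg v b hb, hbS v hv] at hhb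
    omega
  have ord1cge : ∀ v, v ∉ S → 0 ≤ ord v (1 - c) := by
    intro v hv
    have h := hadd v 1 (-c) one_ne_zero (neg_ne_zero.2 hc0)
      (by rw [← sub_eq_add_neg]; exact h1c)
    rw [← sub_eq_add_neg, ord1 v, ordneg v c hc0, ordc0 v hv] at h
    omega
  -- the big finite set
  set T : Finset V := S ∪ (hfin c hc0).toFinset ∪ (hfin (1 - a) h1a).toFinset ∪
    (hfin (1 - b) h1b).toFinset ∪ (hfin (1 - c) h1c).toFinset with hTdef
  have hTc : ∀ v, ord v c ≠ 0 → v ∈ T := by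
    intro v hv; simp [hTdef, Set.Finite.mem_toFinset]; tauto
  have hT1a : ∀ v, ord v (1 - a) ≠ 0 → v ∈ T := by
    intro v hv; simp [hTdef, Set.Finite.mem_toFinset]; tauto
  have hT1b : ∀ v, ord v (1 - b) ≠ 0 → v ∈ T := by
    intro v hv; simp [hTdef, Set.Finite.mem_toFinset]; tauto
  have hT1c : ∀ v, ord v (1 - c) ≠ 0 → v ∈ T := by
    intro v hv; simp [hTdef, Set.Finite.mem_toFinset]; tauto
  -- finsum → finset sum conversions
  have hHc : ∑ᶠ v, max 0 (ord v c) = ∑ v ∈ T, max 0 (ord v c) := by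
    apply finsum_eq_sum_of_support_subset
    intro v hv
    refine hTc v (fun h => ?_)
    simp [Function.mem_support, h] at hv
  have hHa : ∑ᶠ v, max 0 (ord v a) = ∑ v ∈ T, max 0 (ord v a) := by
    apply finsum_eq_sum_of_support_subset
    intro v hv
    refine hTc v (fun h => ?_)
    simp [Function.mem_support, orda v, h] at hv
  have hHb : ∑ᶠ v, max 0 (ord v b) = ∑ v ∈ T, max 0 (ord v b) := by
    apply finsum_eq_sum_of_support_subset
    intro v hv
    refine hTc v (fun h => ?_)
    simp [Function.mem_support, ordb v, h] at hv
  have hsum0c : ∑ v ∈ T, ord v c = 0 := by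
    rw [← finsum_eq_sum_of_support_subset _ (fun v hv => hTc v hv)]
    exact hdeg c hc0
  have hsum01c : ∑ v ∈ T, ord v (1 - c) = 0 := by
    rw [← finsum_eq_sum_of_support_subset _ (fun v hv => hT1c v hv)]
    exact hdeg (1 - c) h1c
  -- min-parts of ord (1-c) and ord c agree
  have hmineq : ∀ v, min 0 (ord v (1 - c)) = min 0 (ord v c) := by
    intro v
    rcases lt_or_ge (ord v c) 0 with h | h
    · have := ordaddeq v (-c) 1 (neg_ne_zero.2 hc0) one_ne_zero
        (by rw [ordneg v c hc0, ord1 v]; omega)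
      rw [show (-c) + 1 = 1 - c by ring, ordneg v c hc0] at this
      omega
    · have hh := hadd v 1 (-c) one_ne_zero (neg_ne_zero.2 hc0)
        (by rw [← sub_eq_add_neg]; exact h1c)
      rw [← sub_eq_add_neg, ord1 v, ordneg v c hc0] at hh
      omega
  have hmax1c : ∑ v ∈ T, max 0 (ord v (1 - c)) = ∑ v ∈ T, max 0 (ord v c) := by
    have e1 : ∀ x : ℤ, max 0 x = x - min 0 x := by intro x; omega
    calc ∑ v ∈ T, max 0 (ord v (1 - c))
        = ∑ v ∈ T, (ord v (1 - c) - min 0 (ord v (1 - c))) := by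
          exact Finset.sum_congr rfl fun v _ => e1 _
      _ = (∑ v ∈ T, ord v (1 - c)) - ∑ v ∈ T, min 0 (ord v (1 - c)) := by
          rw [Finset.sum_sub_distrib]
      _ = (∑ v ∈ T, ord v c) - ∑ v ∈ T, min 0 (ord v c) := by
          rw [hsum01c, hsum0c]
          congr 1
          exact Finset.sum_congr rfl fun v _ => hmineq v
      _ = ∑ v ∈ T, max 0 (ord v c) := by
          rw [← Finset.sum_sub_distrib]
          exact Finset.sum_congr rfl fun v _ => (e1 _).symm
  -- the main inequality
  have hineq : (∑ᶠ (v) (_ : v ∉ S), min (ord v (1 - a)) (ord v (1 - b)))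
      ≤ ∑ᶠ v, max 0 (ord v c) := by
    have hconv : (∑ᶠ (v) (_ : v ∉ S), min (ord v (1 - a)) (ord v (1 - b)))
        = ∑ v ∈ T \ S, min (ord v (1 - a)) (ord v (1 - b)) := by
      apply finsum_cond_eq_sum_of_cond_iff
      intro v hv
      have hvT : v ∈ T := by
        rcases eq_or_ne (ord v (1 - a)) 0 with h1 | h1
        · refine hT1b v (fun h2 => ?_)
          simp [h1, h2] at hv
        · exact hT1a v h1
      simp [Finset.mem_sdiff, hvT]
    rw [hconv, hHc, ← hmax1c]
    calc ∑ v ∈ T \ S, min (ord v (1 - a)) (ord v (1 - b))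
        ≤ ∑ v ∈ T \ S, max 0 (ord v (1 - c)) := by
          apply Finset.sum_le_sum
          intro v hv
          have hvS : v ∉ S := (Finset.mem_sdiff.1 hv).2
          have := keypt v hvS
          have := ord1cge v hvS
          omega
      _ ≤ ∑ v ∈ T, max 0 (ord v (1 - c)) := by
          apply Finset.sum_le_sum_of_subset_of_nonneg (Finset.sdiff_subset)
          intro v _ _
          exact le_max_left 0 _
  -- the height identities
  have habs : ∀ (m : ℤ), m ≠ 0 → (∀ v, ord v (c ^ m) = m * ord v c) →
      |m| * (∑ v ∈ T, max 0 (ord v c)) = ∑ v ∈ T, max 0 (m * ord v c) := by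
    intro m hm _
    rcases lt_or_gt_of_ne hm with hneg | hpos
    · have e1 : ∀ x : ℤ, max 0 (m * x) = (-m) * max 0 (-x) := by
        intro x
        rcases le_or_gt x 0 with hx | hx
        · have h1 : 0 ≤ m * x := by nlinarith
          rw [max_eq_right h1, max_eq_right (by omega : (0:ℤ) ≤ -x)]
          ring
        · have h1 : m * x ≤ 0 := by nlinarith
          rw [max_eq_left h1, max_eq_left (by omega : -x ≤ (0:ℤ))]
          ring
      have e2 : ∑ v ∈ T, max 0 (-(ord v c)) = ∑ v ∈ T, max 0 (ord v c) := by
        have e3 : ∀ x : ℤ, max 0 (-x) = max 0 x - x := by intro x; omega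
        calc ∑ v ∈ T, max 0 (-(ord v c))
            = ∑ v ∈ T, (max 0 (ord v c) - ord v c) :=
              Finset.sum_congr rfl fun v _ => e3 _
          _ = (∑ v ∈ T, max 0 (ord v c)) - ∑ v ∈ T, ord v c := Finset.sum_sub_distrib _ _
          _ = ∑ v ∈ T, max 0 (ord v c) := by rw [hsum0c, sub_zero]
      calc |m| * (∑ v ∈ T, max 0 (ord v c))
          = (-m) * ∑ v ∈ T, max 0 (-(ord v c)) := by rw [e2, abs_of_neg hneg]
        _ = ∑ v ∈ T, (-m) * max 0 (-(ord v c)) := Finset.mul_sum _ _ _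
        _ = ∑ v ∈ T, max 0 (m * ord v c) :=
            Finset.sum_congr rfl fun v _ => (e1 _).symm
    · have e1 : ∀ x : ℤ, max 0 (m * x) = m * max 0 x := by
        intro x
        rcases le_or_gt x 0 with hx | hx
        · have h1 : m * x ≤ 0 := by nlinarith
          rw [max_eq_left h1, max_eq_left hx, mul_zero]
        · have h1 : 0 ≤ m * x := by nlinarith
          rw [max_eq_right h1, max_eq_right hx.le]
      calc |m| * (∑ v ∈ T, max 0 (ord v c))
          = ∑ v ∈ T, m * max 0 (ord v c) := by rw [abs_of_pos hpos, Finset.mul_sum]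
        _ = ∑ v ∈ T, max 0 (m * ord v c) :=
            Finset.sum_congr rfl fun v _ => (e1 _).symm
  refine ⟨c, hc0, ordc0, hca, hcb, hineq, ?_, ?_⟩
  · rw [hHc, hHa, habs s hs (fun v => ordzpow v c hc0 s)]
    exact Finset.sum_congr rfl fun v _ => by rw [orda v]
  · rw [hHc, hHb, habs r hr (fun v => ordzpow v c hc0 r)]
    exact Finset.sum_congr rfl fun v _ => by rw [ordb v]
end
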